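/- arXiv:1706.04436 — 6 statements merged into one kernel-verified Lean document; each statement's English description precedes it below -/
import Mathlib

section
/- Let A and B be Banach algebras, σ ∈ Hom(A), τ ∈ Hom(B), and φ : A → B a continuous algebra homomorphism with dense range satisfying τ ∘ φ = φ ∘ σ. If A is σ-amenable, then B is τ-amenable. -/
/-- A Banach `A`-bimodule: continuous bilinear left and right actions
(`smulL a x = a·x`, `smulR a x = x·a`) which are associative and commute. -/
structure BanachBimodule (A : Type u) [NonUnitalNormedRing A] [NormedSpace ℂ A]
    (E : Type v) [NormedAddCommGroup E] [NormedSpace ℂ E] : Type (max u v) where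
  smulL : A →L[ℂ] E →L[ℂ] E
  smulR : A →L[ℂ] E →L[ℂ] E
  smulL_mul : ∀ a b x, smulL (a * b) x = smulL a (smulL b x)
  smulR_mul : ∀ a b x, smulR (a * b) x = smulR b (smulR a x)
  smul_assoc : ∀ a b x, smulL a (smulR b x) = smulR b (smulL a x)

/-- `σ`-amenability of a Banach algebra `B`: for every Banach `B`-bimodule `E`,
every (bounded) `σ`-derivation `D : B → E*` into the dual bimodule is `σ`-inner.
The dual actions are `(b·Λ)(x) = Λ(x·b)` and `(Λ·b)(x) = Λ(b·x)`. -/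
def SigmaAmenable (B : Type u) [NonUnitalNormedRing B] [NormedSpace ℂ B]
    (s : B → B) : Prop :=
  ∀ (E : Type u) (_ : NormedAddCommGroup E) (_ : NormedSpace ℂ E)
    (_ : CompleteSpace E) (M : BanachBimodule B E)
    (D : B →L[ℂ] (E →L[ℂ] ℂ)),
    (∀ a b x, D (a * b) x = D a (M.smulL (s b) x) + D b (M.smulR (s a) x)) →
    ∃ Λ : E →L[ℂ] ℂ, ∀ a x, D a x = Λ (M.smulR (s a) x) - Λ (M.smulL (s a) x)

/-- if `φ : A → B` is a continuous homomorphism with dense range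
intertwining `σ` and `τ` (`τ ∘ φ = φ ∘ σ`), and `A` is `σ`-amenable, then `B`
is `τ`-amenable. -/
theorem stmt4 {A B : Type u} [NonUnitalNormedRing A] [NormedSpace ℂ A]
    [IsScalarTower ℂ A A] [SMulCommClass ℂ A A] [CompleteSpace A]
    [NonUnitalNormedRing B] [NormedSpace ℂ B]
    [IsScalarTower ℂ B B] [SMulCommClass ℂ B B] [CompleteSpace B]
    (σ : A →L[ℂ] A) (hσ : ∀ a b : A, σ (a * b) = σ a * σ b)
    (τ : B →L[ℂ] B) (hτ : ∀ a b : B, τ (a * b) = τ a * τ b)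
    (φ : A →L[ℂ] B) (hφ : ∀ a b : A, φ (a * b) = φ a * φ b)
    (hdense : DenseRange φ) (hcomm : ∀ a : A, τ (φ a) = φ (σ a))
    (hA : SigmaAmenable A σ) : SigmaAmenable B τ := by
  intro E _ _ _ M D hD
  -- pull back the bimodule structure along φ
  set M' : BanachBimodule A E :=
    { smulL := M.smulL.comp φ
      smulR := M.smulR.comp φ
      smulL_mul := by
        intro a b x
        simp only [ContinuousLinearMap.comp_apply, hφ]
        exact M.smulL_mul _ _ _
      smulR_mul := by
        intro a b x
        simp only [ContinuousLinearMap.comp_apply, hφ]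
        exact M.smulR_mul _ _ _
      smul_assoc := by
        intro a b x
        exact M.smul_assoc _ _ _ } with hM'
  obtain ⟨Λ, hΛ⟩ := hA E ‹_› ‹_› ‹_› M' (D.comp φ) (by
    intro a b x
    simp only [ContinuousLinearMap.comp_apply, hφ, hM']
    rw [hD (φ a) (φ b) x, hcomm, hcomm])
  refine ⟨Λ, fun b x => ?_⟩
  have key : ∀ a : A, D (φ a) x = Λ (M.smulR (τ (φ a)) x) - Λ (M.smulL (τ (φ a)) x) := by
    intro a
    have := hΛ a x
    simpa [hM', hcomm] using this
  have hc1 : Continuous fun b : B => D b x := by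
    exact (ContinuousLinearMap.apply ℂ ℂ x).continuous.comp D.continuous
  have hc2 : Continuous fun b : B =>
      Λ (M.smulR (τ b) x) - Λ (M.smulL (τ b) x) := by
    apply Continuous.sub
    · exact Λ.continuous.comp (((ContinuousLinearMap.apply ℂ E x).continuous.comp
        M.smulR.continuous).comp τ.continuous)
    · exact Λ.continuous.comp (((ContinuousLinearMap.apply ℂ E x).continuous.comp
        M.smulL.continuous).comp τ.continuous)
  have := Continuous.ext_on hdense hc1 hc2 (by
    rintro _ ⟨a, rfl⟩
    exact key a)
  exact congrFun this b
end

section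
/- Let X be a compact Hausdorff space, A a Banach algebra, and τ ∈ Hom(C(X,A)) such that T_{x₀} ∘ τ = τ̃_{x₀} ∘ T_{x₀} for some x₀ ∈ X. If C(X,A) is τ-amenable, then A is τ̃_{x₀}-amenable. -/
/-! Evaluation at `x₀` is a surjective homomorphism `C(X, A) → A` (constants give preimages)
intertwining `τ` and `τ̃_{x₀}`, and σ-amenability passes along such maps: pull the bimodule and the
derivation back along the surjection, and the functional implementing the pulled-back derivation
implements the original one. -/

namespace BanachBimodule

variable {A B : Type*} [NonUnitalNormedRing A] [NormedSpace ℂ A]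
  [NonUnitalNormedRing B] [NormedSpace ℂ B]
  {E : Type*} [NormedAddCommGroup E] [NormedSpace ℂ E]

noncomputable def comap (M : BanachBimodule A E) (φ : B →L[ℂ] A)
    (hφ : ∀ a b, φ (a * b) = φ a * φ b) : BanachBimodule B E where
  smulL := M.smulL.comp φ
  smulR := M.smulR.comp φ
  smulL_mul a b x := by simpa only [ContinuousLinearMap.comp_apply, hφ] using M.smulL_mul _ _ x
  smulR_mul a b x := by simpa only [ContinuousLinearMap.comp_apply, hφ] using M.smulR_mul _ _ x
  smul_assoc a b x := M.smul_assoc (φ a) (φ b) x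

@[simp]
theorem comap_smulL (M : BanachBimodule A E) (φ : B →L[ℂ] A) (hφ : ∀ a b, φ (a * b) = φ a * φ b)
    (b : B) : (M.comap φ hφ).smulL b = M.smulL (φ b) := rfl

@[simp]
theorem comap_smulR (M : BanachBimodule A E) (φ : B →L[ℂ] A) (hφ : ∀ a b, φ (a * b) = φ a * φ b)
    (b : B) : (M.comap φ hφ).smulR b = M.smulR (φ b) := rfl

end BanachBimodule

theorem SigmaAmenable.of_surjective {A B : Type u} [NonUnitalNormedRing A] [NormedSpace ℂ A]
    [NonUnitalNormedRing B] [NormedSpace ℂ B] {σ : B → B} {s : A → A}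
    (hB : SigmaAmenable B σ) (φ : B →L[ℂ] A) (hφ : ∀ a b, φ (a * b) = φ a * φ b)
    (hφs : Function.Surjective φ) (hσ : ∀ b, φ (σ b) = s (φ b)) : SigmaAmenable A s := by
  intro E _ _ _ M D hD
  obtain ⟨Λ, hΛ⟩ := hB E ‹_› ‹_› ‹_› (M.comap φ hφ) (D.comp φ) fun a b x => by
    simpa only [ContinuousLinearMap.comp_apply, BanachBimodule.comap_smulL,
      BanachBimodule.comap_smulR, hφ, hσ] using hD (φ a) (φ b) x
  refine ⟨Λ, fun a x => ?_⟩
  obtain ⟨b, rfl⟩ := hφs a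
  simpa only [ContinuousLinearMap.comp_apply, BanachBimodule.comap_smulL,
    BanachBimodule.comap_smulR, hσ] using hΛ b x

theorem stmt5_general {X : Type u} {A : Type u} [TopologicalSpace X] [CompactSpace X]
    [NonUnitalNormedRing A] [NormedSpace ℂ A]
    (τ : C(X, A) →L[ℂ] C(X, A))
    (x₀ : X)
    (τx : A →L[ℂ] A)
    (hcomm : ∀ f : C(X, A), τ f x₀ = τx (f x₀))
    (hCXA : SigmaAmenable C(X, A) τ) : SigmaAmenable A τx :=
  hCXA.of_surjective (ContinuousMap.evalCLM ℂ x₀) (fun _ _ => rfl)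
    (fun a => ⟨ContinuousMap.const X a, rfl⟩) hcomm

/-- if `τ ∈ Hom(C(X,A))` satisfies `T_{x₀} ∘ τ = τ̃_{x₀} ∘ T_{x₀}`
for some `x₀ ∈ X` (where `τ̃_{x₀}(a) = τ(1_a)(x₀)`), and `C(X,A)` is
`τ`-amenable, then `A` is `τ̃_{x₀}`-amenable. -/
theorem stmt5 {X : Type u} {A : Type u} [TopologicalSpace X] [CompactSpace X]
    [T2Space X] [NonUnitalNormedRing A] [NormedSpace ℂ A] [IsScalarTower ℂ A A]
    [SMulCommClass ℂ A A] [CompleteSpace A]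
    (τ : C(X, A) →L[ℂ] C(X, A)) (hτ : ∀ f g : C(X, A), τ (f * g) = τ f * τ g)
    (x₀ : X)
    (τx : A →L[ℂ] A) (hτx : ∀ a : A, τx a = τ (ContinuousMap.const X a) x₀)
    (hcomm : ∀ f : C(X, A), τ f x₀ = τx (f x₀))
    (hCXA : SigmaAmenable C(X, A) τ) : SigmaAmenable A τx :=
  stmt5_general τ x₀ τx hcomm hCXA
end

section
/- Let η be a continuous algebra homomorphism from C(X,A) to C(X,A), and define τ : C(X,A) → C(X,A) by τ(f)(x) = η(1_{f(x)})(x) for f ∈ C(X,A) and x ∈ X. Then τ is a continuous algebra homomorphism on C(X,A) and satisfies T_x ∘ τ = τ̃_x ∘ T_x for all x ∈ X. -/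
/-! `τ` is the diagonal `f ↦ (x ↦ Φ (f x) x)` of the continuous linear map `Φ a = η (1_a)`
from `A` to `C(X, A)`. Because `X` is compact and `A` is a metric space, evaluation
`C(X, A) × X → A` is jointly continuous, so `τ f` is continuous and `τ` is continuous for
the compact-open (= sup-norm) topology; linearity and multiplicativity of `τ` hold pointwise,
since `Φ` is linear and multiplicative. -/

namespace ContinuousLinearMap

section diagonalEval

variable {R X A B : Type*} [Semiring R] [TopologicalSpace X]
  [AddCommMonoid A] [TopologicalSpace A] [ContinuousAdd A] [Module R A] [ContinuousConstSMul R A]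
  [AddCommMonoid B] [TopologicalSpace B] [ContinuousAdd B] [Module R B] [ContinuousConstSMul R B]
  [LocallyCompactPair X A] [LocallyCompactPair X B]

def diagonalEval (Φ : A →L[R] C(X, B)) : C(X, A) →L[R] C(X, B) where
  toFun f := ⟨fun x => Φ (f x) x, (Φ.continuous.comp f.continuous).eval continuous_id⟩
  map_add' f g := by ext x; simp
  map_smul' c f := by ext x; simp
  cont := ContinuousMap.continuous_of_continuous_uncurry _ <|
    (Φ.continuous.comp continuous_eval).eval continuous_snd

@[simp]
theorem diagonalEval_apply (Φ : A →L[R] C(X, B)) (f : C(X, A)) (x : X) :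
    Φ.diagonalEval f x = Φ (f x) x :=
  rfl

end diagonalEval

theorem diagonalEval_mul {R X A B : Type*} [Semiring R] [TopologicalSpace X]
    [NonUnitalNonAssocSemiring A] [TopologicalSpace A] [ContinuousAdd A] [ContinuousMul A]
    [Module R A] [ContinuousConstSMul R A]
    [NonUnitalNonAssocSemiring B] [TopologicalSpace B] [ContinuousAdd B] [ContinuousMul B]
    [Module R B] [ContinuousConstSMul R B]
    [LocallyCompactPair X A] [LocallyCompactPair X B]
    (Φ : A →L[R] C(X, B)) (hΦ : ∀ a b, Φ (a * b) = Φ a * Φ b) (f g : C(X, A)) :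
    Φ.diagonalEval (f * g) = Φ.diagonalEval f * Φ.diagonalEval g := by
  ext x
  simp only [diagonalEval_apply, ContinuousMap.mul_apply, hΦ]

end ContinuousLinearMap

theorem stmt6_general {X A : Type*} [TopologicalSpace X] [CompactSpace X]
    [NonUnitalNormedRing A] [NormedSpace ℂ A]
    (η : C(X, A) →L[ℂ] C(X, A)) (hη : ∀ f g : C(X, A), η (f * g) = η f * η g) :
    ∃ τ : C(X, A) → C(X, A),
      (∀ (f : C(X, A)) (x : X), τ f x = η (ContinuousMap.const X (f x)) x) ∧
      Continuous τ ∧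
      (∀ f g : C(X, A), τ (f + g) = τ f + τ g) ∧
      (∀ (c : ℂ) (f : C(X, A)), τ (c • f) = c • τ f) ∧
      (∀ f g : C(X, A), τ (f * g) = τ f * τ g) ∧
      (∀ (f : C(X, A)) (x : X), τ f x = τ (ContinuousMap.const X (f x)) x) := by
  set Φ : A →L[ℂ] C(X, A) := η.comp (ContinuousLinearMap.const ℂ X)
  have hΦ : ∀ a b : A, Φ (a * b) = Φ a * Φ b := fun a b => hη (.const X a) (.const X b)
  exact ⟨Φ.diagonalEval, fun _ _ => rfl, Φ.diagonalEval.continuous, map_add _, map_smul _,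
    Φ.diagonalEval_mul hΦ, fun _ _ => rfl⟩

/-- given `η ∈ Hom(C(X,A))`, the formula `τ(f)(x) = η(1_{f(x)})(x)`
defines a continuous algebra homomorphism `τ` on `C(X,A)` (in particular each
`τ(f)` is continuous, i.e. `τ(f) ∈ C(X,A)`), and `T_x ∘ τ = τ̃_x ∘ T_x` for all
`x ∈ X`, i.e. `τ(f)(x) = τ(1_{f(x)})(x)`. -/
theorem stmt6 {X A : Type*} [TopologicalSpace X] [CompactSpace X] [T2Space X]
    [NonUnitalNormedRing A] [NormedSpace ℂ A] [IsScalarTower ℂ A A]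
    [SMulCommClass ℂ A A] [CompleteSpace A]
    (η : C(X, A) →L[ℂ] C(X, A)) (hη : ∀ f g : C(X, A), η (f * g) = η f * η g) :
    ∃ τ : C(X, A) → C(X, A),
      (∀ (f : C(X, A)) (x : X), τ f x = η (ContinuousMap.const X (f x)) x) ∧
      Continuous τ ∧
      (∀ f g : C(X, A), τ (f + g) = τ f + τ g) ∧
      (∀ (c : ℂ) (f : C(X, A)), τ (c • f) = c • τ f) ∧
      (∀ f g : C(X, A), τ (f * g) = τ f * τ g) ∧
      (∀ (f : C(X, A)) (x : X), τ f x = τ (ContinuousMap.const X (f x)) x) :=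
  stmt6_general η hη
end

section
/- Let A be a Banach algebra with a bounded net (e_v) such that (σ(e_v)) is a bounded approximate identity for A, where σ ∈ Hom(A) has dense range, and let X be a compact Hausdorff space. Then (the constant functions) 1_{σ(e_v)} form a bounded approximate identity for C(X,A). -/
/-!
Multiplication by a norm-bounded family is uniformly equicontinuous, and an equicontinuous family
of maps converging pointwise converges uniformly on compact sets (Ascoli). Applied on the compact
range of `f : C(X, A)`, pointwise convergence `σ(e_v) a → a` upgrades to uniform convergence
`σ(e_v) f → f`, and similarly on the right.
-/

open Filter Topology

theorem Equicontinuous.tendstoUniformlyOn_of_tendsto {ι X α : Type*} [TopologicalSpace X]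
    [UniformSpace α] {F : ι → X → α} (hF : Equicontinuous F) {f : X → α} {l : Filter ι}
    (hlim : ∀ x, Tendsto (F · x) l (𝓝 (f x))) {K : Set X} (hK : IsCompact K) :
    TendstoUniformlyOn F f l K := by
  have : CompactSpace K := isCompact_iff_compactSpace.mp hK
  have hFK : Equicontinuous (K.domRestrict ∘ F) :=
    (equicontinuous_restrict_iff F).mpr (hF.equicontinuousOn K)
  rw [tendstoUniformlyOn_iff_tendstoUniformly_comp_coe]
  exact UniformFun.tendsto_iff_tendstoUniformly.mp <|
    (hFK.tendsto_uniformFun_iff_pi l (K.domRestrict f)).mpr <| tendsto_pi_nhds.mpr fun x => hlim x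

theorem ContinuousMap.tendsto_of_equicontinuous_of_tendsto_id {ι X α : Type*}
    [TopologicalSpace X] [CompactSpace X] [UniformSpace α] {T : ι → α → α}
    (hT : Equicontinuous T) {l : Filter ι} (hlim : ∀ a, Tendsto (T · a) l (𝓝 a))
    (f : C(X, α)) (F : ι → C(X, α)) (hF : ∀ v x, F v x = T v (f x)) :
    Tendsto F l (𝓝 f) := by
  have hunif := (hT.tendstoUniformlyOn_of_tendsto hlim (isCompact_range f.continuous)).comp f
  rw [Set.preimage_range] at hunif
  rw [ContinuousMap.tendsto_iff_tendstoUniformly]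
  simp only [hF]
  exact tendstoUniformlyOn_univ.mp hunif

section BoundedMultipliers

variable {ι R : Type*} [NonUnitalSeminormedRing R] {u : ι → R} {C : ℝ}

theorem uniformEquicontinuous_mul_left_of_norm_le (hu : ∀ v, ‖u v‖ ≤ C) :
    UniformEquicontinuous fun v (a : R) => u v * a := by
  refine LipschitzWith.uniformEquicontinuous _ C.toNNReal fun v => ?_
  refine LipschitzWith.of_dist_le_mul fun a b => ?_
  rw [dist_eq_norm, dist_eq_norm, ← mul_sub]
  exact (norm_mul_le _ _).trans (by gcongr; exact (hu v).trans (Real.le_coe_toNNReal C))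

theorem uniformEquicontinuous_mul_right_of_norm_le (hu : ∀ v, ‖u v‖ ≤ C) :
    UniformEquicontinuous fun v (a : R) => a * u v := by
  refine LipschitzWith.uniformEquicontinuous _ C.toNNReal fun v => ?_
  refine LipschitzWith.of_dist_le_mul fun a b => ?_
  rw [dist_eq_norm, dist_eq_norm, ← sub_mul, mul_comm (C.toNNReal : ℝ)]
  exact (norm_mul_le _ _).trans (by gcongr; exact (hu v).trans (Real.le_coe_toNNReal C))

variable {X : Type*} [TopologicalSpace X] [CompactSpace X] {l : Filter ι}

theorem ContinuousMap.tendsto_const_mul_of_norm_le (hu : ∀ v, ‖u v‖ ≤ C)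
    (hlim : ∀ a, Tendsto (fun v => u v * a) l (𝓝 a)) (f : C(X, R)) :
    Tendsto (fun v => ContinuousMap.const X (u v) * f) l (𝓝 f) :=
  tendsto_of_equicontinuous_of_tendsto_id
    (uniformEquicontinuous_mul_left_of_norm_le hu).equicontinuous hlim f _ fun _ _ => rfl

theorem ContinuousMap.tendsto_mul_const_of_norm_le (hu : ∀ v, ‖u v‖ ≤ C)
    (hlim : ∀ a, Tendsto (fun v => a * u v) l (𝓝 a)) (f : C(X, R)) :
    Tendsto (fun v => f * ContinuousMap.const X (u v)) l (𝓝 f) :=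
  tendsto_of_equicontinuous_of_tendsto_id
    (uniformEquicontinuous_mul_right_of_norm_le hu).equicontinuous hlim f _ fun _ _ => rfl

end BoundedMultipliers

theorem stmt9_general {X A : Type*} [TopologicalSpace X] [CompactSpace X]
    [NonUnitalNormedRing A] [NormedSpace ℂ A]
    (σ : A →L[ℂ] A)
    {ι : Type*} [Preorder ι]
    (e : ι → A) (hbdd : ∃ M : ℝ, ∀ v, ‖e v‖ ≤ M)
    (hbai : ∀ a : A, Tendsto (fun v => σ (e v) * a) atTop (nhds a) ∧
      Tendsto (fun v => a * σ (e v)) atTop (nhds a)) :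
    (∃ M : ℝ, ∀ v, ‖(ContinuousMap.const X (σ (e v)) : C(X, A))‖ ≤ M) ∧
    ∀ f : C(X, A),
      Tendsto (fun v => (ContinuousMap.const X (σ (e v)) : C(X, A)) * f) atTop (nhds f) ∧
      Tendsto (fun v => f * (ContinuousMap.const X (σ (e v)) : C(X, A))) atTop (nhds f) := by
  obtain ⟨M, hM⟩ := hbdd
  have hσe : ∀ v, ‖σ (e v)‖ ≤ ‖σ‖ * M := fun v =>
    (σ.le_opNorm (e v)).trans (mul_le_mul_of_nonneg_left (hM v) (norm_nonneg σ))
  refine ⟨⟨‖σ‖ * M, fun v => ?_⟩, fun f => ⟨?_, ?_⟩⟩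
  · exact (ContinuousMap.norm_le _ ((norm_nonneg _).trans (hσe v))).mpr fun _ => hσe v
  · exact ContinuousMap.tendsto_const_mul_of_norm_le hσe (fun a => (hbai a).1) f
  · exact ContinuousMap.tendsto_mul_const_of_norm_le hσe (fun a => (hbai a).2) f

/-- if `(e_v)` is a bounded net in `A` such that `(σ(e_v))` is a
bounded approximate identity for `A`, where `σ ∈ Hom(A)` has dense range, then
the constant functions `1_{σ(e_v)}` form a bounded approximate identity for
`C(X,A)`. -/
theorem stmt9 {X A : Type*} [TopologicalSpace X] [CompactSpace X] [T2Space X]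
    [NonUnitalNormedRing A] [NormedSpace ℂ A] [IsScalarTower ℂ A A]
    [SMulCommClass ℂ A A] [CompleteSpace A]
    (σ : A →L[ℂ] A) (hσ : ∀ a b : A, σ (a * b) = σ a * σ b)
    (hdense : DenseRange σ)
    {ι : Type*} [Nonempty ι] [Preorder ι] [IsDirected ι (· ≤ ·)]
    (e : ι → A) (hbdd : ∃ M : ℝ, ∀ v, ‖e v‖ ≤ M)
    (hbai : ∀ a : A, Tendsto (fun v => σ (e v) * a) atTop (nhds a) ∧
      Tendsto (fun v => a * σ (e v)) atTop (nhds a)) :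
    (∃ M : ℝ, ∀ v, ‖(ContinuousMap.const X (σ (e v)) : C(X, A))‖ ≤ M) ∧
    ∀ f : C(X, A),
      Tendsto (fun v => (ContinuousMap.const X (σ (e v)) : C(X, A)) * f) atTop (nhds f) ∧
      Tendsto (fun v => f * (ContinuousMap.const X (σ (e v)) : C(X, A))) atTop (nhds f) :=
  stmt9_general σ e hbdd hbai
end

section
/- Let A be a commutative algebra, I an ideal of A, E an A-module, σ a homomorphism on A, and D : I → E a σ-derivation. Define D̃ : I × A → E by D̃(a,b) := D(ab) − σ(b)·D(a). Then D̃ is bilinear and D̃(a,b) = σ(a)·D(b) for all a, b ∈ I. -/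
/-- let `A` be a commutative algebra, `I` an ideal, `E` an
`A`-module, `σ` an algebra homomorphism of `A` and `D : I → E` a
`σ`-derivation. Then `D̃(a,b) := D(ab) − σ(b)·D(a)` is bilinear on `I × A` and
`D̃(a,b) = σ(a)·D(b)` for `a, b ∈ I`. -/
theorem stmt13 {A : Type u} [CommRing A] [Algebra ℂ A]
    {E : Type v} [AddCommGroup E] [Module ℂ E] [Module A E]
    [IsScalarTower ℂ A E]
    (I : Ideal A)
    (σ : A →ₗ[ℂ] A) (hσ : ∀ a b : A, σ (a * b) = σ a * σ b)
    (D : I →ₗ[ℂ] E)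
    (hD : ∀ x y : I, D ⟨(x : A) * (y : A), I.mul_mem_left (x : A) y.2⟩
      = σ (y : A) • D x + σ (x : A) • D y)
    (Dt : I → A → E)
    (hDt : Dt = fun (a : I) (b : A) => D ⟨(a : A) * b, I.mul_mem_right b a.2⟩ - σ b • D a) :
    (∀ (a₁ a₂ : I) (b : A), Dt (a₁ + a₂) b = Dt a₁ b + Dt a₂ b) ∧
    (∀ (c : ℂ) (a : I) (b : A), Dt (c • a) b = c • Dt a b) ∧
    (∀ (a : I) (b₁ b₂ : A), Dt a (b₁ + b₂) = Dt a b₁ + Dt a b₂) ∧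
    (∀ (c : ℂ) (a : I) (b : A), Dt a (c • b) = c • Dt a b) ∧
    (∀ a b : I, Dt a (b : A) = σ (a : A) • D b) := by
  subst hDt
  simp only []
  refine ⟨?_, ?_, ?_, ?_, ?_⟩
  · intro a₁ a₂ b
    have h : (⟨((a₁ + a₂ : I) : A) * b, I.mul_mem_right b (a₁ + a₂).2⟩ : I)
        = ⟨(a₁ : A) * b, I.mul_mem_right b a₁.2⟩ + ⟨(a₂ : A) * b, I.mul_mem_right b a₂.2⟩ :=
      Subtype.ext (by push_cast; ring)
    rw [h, map_add, map_add]
    rw [smul_add]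
    abel
  · intro c a b
    have h : (⟨((c • a : I) : A) * b, I.mul_mem_right b (c • a).2⟩ : I)
        = c • ⟨(a : A) * b, I.mul_mem_right b a.2⟩ :=
      Subtype.ext (by push_cast; rw [smul_mul_assoc])
    rw [h, map_smul, map_smul, smul_sub, smul_comm c]
  · intro a b₁ b₂
    have h : (⟨(a : A) * (b₁ + b₂), I.mul_mem_right _ a.2⟩ : I)
        = ⟨(a : A) * b₁, I.mul_mem_right b₁ a.2⟩ + ⟨(a : A) * b₂, I.mul_mem_right b₂ a.2⟩ :=
      Subtype.ext (by push_cast; ring)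
    rw [h, map_add, map_add, add_smul]
    abel
  · intro c a b
    have h : (⟨(a : A) * (c • b), I.mul_mem_right _ a.2⟩ : I)
        = c • ⟨(a : A) * b, I.mul_mem_right b a.2⟩ :=
      Subtype.ext (by push_cast; rw [mul_smul_comm])
    rw [h, map_smul, map_smul, smul_sub, smul_assoc, smul_comm c]
  · intro a b
    show D ⟨(a : A) * (b : A), I.mul_mem_left (a : A) b.2⟩ - σ (b : A) • D a = σ (a : A) • D b
    rw [hD a b]
    abel
end

section
/- Let A be a commutative algebra, I an ideal of A, E an A-module, σ a homomorphism on A, and D : I → E a σ-derivation. Define D̃(a,b) := D(ab) − σ(b)·D(a) for a ∈ I, b ∈ A. Then for each fixed a ∈ I², the map b ↦ D̃(a,b) from A to E is a σ-derivation, i.e., D̃(a, b₁b₂) = σ(b₁)·D̃(a,b₂) + σ(b₂)·D̃(a,b₁) for all b₁, b₂ ∈ A. -/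
/-- with `A` a commutative algebra, `I` an ideal, `E` an
`A`-module, `σ` a homomorphism of `A`, `D : I → E` a `σ`-derivation, and
`D̃(a,b) := D(ab) − σ(b)·D(a)`, for each fixed `a ∈ I²` the map `b ↦ D̃(a,b)`
is a `σ`-derivation: `D̃(a, b₁b₂) = σ(b₁)·D̃(a,b₂) + σ(b₂)·D̃(a,b₁)`. -/
theorem stmt14 {A : Type u} [CommRing A] [Algebra ℂ A]
    {E : Type v} [AddCommGroup E] [Module ℂ E] [Module A E]
    [IsScalarTower ℂ A E]
    (I : Ideal A)
    (σ : A →ₗ[ℂ] A) (hσ : ∀ a b : A, σ (a * b) = σ a * σ b)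
    (D : I →ₗ[ℂ] E)
    (hD : ∀ x y : I, D ⟨(x : A) * (y : A), I.mul_mem_left (x : A) y.2⟩
      = σ (y : A) • D x + σ (x : A) • D y)
    (Dt : I → A → E)
    (hDt : Dt = fun (a : I) (b : A) => D ⟨(a : A) * b, I.mul_mem_right b a.2⟩ - σ b • D a) :
    ∀ a : I, (a : A) ∈ Submodule.span ℂ {z : A | ∃ x ∈ I, ∃ y ∈ I, z = x * y} →
      ∀ b₁ b₂ : A, Dt a (b₁ * b₂) = σ b₁ • Dt a b₂ + σ b₂ • Dt a b₁ := by
  subst hDt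
  intro a ha b₁ b₂
  simp only
  obtain ⟨z, hzI⟩ := a
  simp only at ha ⊢
  obtain ⟨h, hq⟩ : ∃ hz : z ∈ I,
      D ⟨z * (b₁ * b₂), I.mul_mem_right (b₁ * b₂) hz⟩ - σ (b₁ * b₂) • D ⟨z, hz⟩ =
        σ b₁ • (D ⟨z * b₂, I.mul_mem_right b₂ hz⟩ - σ b₂ • D ⟨z, hz⟩) +
        σ b₂ • (D ⟨z * b₁, I.mul_mem_right b₁ hz⟩ - σ b₁ • D ⟨z, hz⟩) := by
    refine Submodule.span_induction
      (p := fun z _ => ∃ hz : z ∈ I,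
        D ⟨z * (b₁ * b₂), I.mul_mem_right (b₁ * b₂) hz⟩ - σ (b₁ * b₂) • D ⟨z, hz⟩ =
          σ b₁ • (D ⟨z * b₂, I.mul_mem_right b₂ hz⟩ - σ b₂ • D ⟨z, hz⟩) +
          σ b₂ • (D ⟨z * b₁, I.mul_mem_right b₁ hz⟩ - σ b₁ • D ⟨z, hz⟩))
      ?_ ?_ ?_ ?_ ha
    · rintro w ⟨x, hx, y, hy, rfl⟩
      have hz : x * y ∈ I := I.mul_mem_left x hy
      refine ⟨hz, ?_⟩
      have e1 : D ⟨x * y * (b₁ * b₂), I.mul_mem_right (b₁ * b₂) hz⟩ =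
          σ (y * b₂) • D ⟨x * b₁, I.mul_mem_right b₁ hx⟩ +
          σ (x * b₁) • D ⟨y * b₂, I.mul_mem_right b₂ hy⟩ := by
        rw [show (⟨x * y * (b₁ * b₂), I.mul_mem_right (b₁ * b₂) hz⟩ : I) =
            ⟨(x * b₁) * (y * b₂), I.mul_mem_left (x * b₁) (I.mul_mem_right b₂ hy)⟩ from
          Subtype.ext (by ring)]
        exact hD ⟨x * b₁, I.mul_mem_right b₁ hx⟩ ⟨y * b₂, I.mul_mem_right b₂ hy⟩
      have e2 : D ⟨x * y, hz⟩ = σ y • D ⟨x, hx⟩ + σ x • D ⟨y, hy⟩ :=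
        hD ⟨x, hx⟩ ⟨y, hy⟩
      have e3 : D ⟨x * y * b₂, I.mul_mem_right b₂ hz⟩ =
          σ (y * b₂) • D ⟨x, hx⟩ + σ x • D ⟨y * b₂, I.mul_mem_right b₂ hy⟩ := by
        rw [show (⟨x * y * b₂, I.mul_mem_right b₂ hz⟩ : I) =
            ⟨x * (y * b₂), I.mul_mem_left x (I.mul_mem_right b₂ hy)⟩ from Subtype.ext (by ring)]
        exact hD ⟨x, hx⟩ ⟨y * b₂, I.mul_mem_right b₂ hy⟩
      have e4 : D ⟨x * y * b₁, I.mul_mem_right b₁ hz⟩ =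
          σ (x * b₁) • D ⟨y, hy⟩ + σ y • D ⟨x * b₁, I.mul_mem_right b₁ hx⟩ := by
        rw [show (⟨x * y * b₁, I.mul_mem_right b₁ hz⟩ : I) =
            ⟨y * (x * b₁), I.mul_mem_left y (I.mul_mem_right b₁ hx)⟩ from Subtype.ext (by ring)]
        exact hD ⟨y, hy⟩ ⟨x * b₁, I.mul_mem_right b₁ hx⟩
      rw [e1, e2, e3, e4, hσ, hσ, hσ]
      module
    · refine ⟨I.zero_mem, ?_⟩
      have z1 : (⟨(0 : A) * (b₁ * b₂), I.mul_mem_right (b₁ * b₂) I.zero_mem⟩ : I) = 0 :=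
        Subtype.ext (by simp)
      have z2 : (⟨(0 : A) * b₂, I.mul_mem_right b₂ I.zero_mem⟩ : I) = 0 := Subtype.ext (by simp)
      have z3 : (⟨(0 : A) * b₁, I.mul_mem_right b₁ I.zero_mem⟩ : I) = 0 := Subtype.ext (by simp)
      have z4 : (⟨(0 : A), I.zero_mem⟩ : I) = 0 := rfl
      rw [z1, z2, z3, z4, map_zero]
      simp
    · rintro u v hus hvs ⟨hu, equ⟩ ⟨hv, eqv⟩
      refine ⟨add_mem hu hv, ?_⟩
      rw [show (⟨(u + v) * (b₁ * b₂), I.mul_mem_right (b₁ * b₂) (add_mem hu hv)⟩ : I) =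
            ⟨u * (b₁ * b₂), I.mul_mem_right _ hu⟩ + ⟨v * (b₁ * b₂), I.mul_mem_right _ hv⟩ from
          Subtype.ext (by push_cast; ring),
        show (⟨(u + v) * b₂, I.mul_mem_right b₂ (add_mem hu hv)⟩ : I) =
            ⟨u * b₂, I.mul_mem_right _ hu⟩ + ⟨v * b₂, I.mul_mem_right _ hv⟩ from
          Subtype.ext (by push_cast; ring),
        show (⟨(u + v) * b₁, I.mul_mem_right b₁ (add_mem hu hv)⟩ : I) =
            ⟨u * b₁, I.mul_mem_right _ hu⟩ + ⟨v * b₁, I.mul_mem_right _ hv⟩ from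
          Subtype.ext (by push_cast; ring),
        show (⟨u + v, add_mem hu hv⟩ : I) = ⟨u, hu⟩ + ⟨v, hv⟩ from rfl,
        map_add, map_add, map_add, map_add]
      linear_combination (norm := module) equ + eqv
    · rintro c u hus ⟨hu, equ⟩
      refine ⟨Submodule.smul_of_tower_mem I c hu, ?_⟩
      rw [show (⟨(c • u) * (b₁ * b₂),
              I.mul_mem_right (b₁ * b₂) (Submodule.smul_of_tower_mem I c hu)⟩ : I) =
            c • ⟨u * (b₁ * b₂), I.mul_mem_right _ hu⟩ from Subtype.ext (by
              simp [smul_mul_assoc]),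
        show (⟨(c • u) * b₂, I.mul_mem_right b₂ (Submodule.smul_of_tower_mem I c hu)⟩ : I) =
            c • ⟨u * b₂, I.mul_mem_right _ hu⟩ from Subtype.ext (by simp [smul_mul_assoc]),
        show (⟨(c • u) * b₁, I.mul_mem_right b₁ (Submodule.smul_of_tower_mem I c hu)⟩ : I) =
            c • ⟨u * b₁, I.mul_mem_right _ hu⟩ from Subtype.ext (by simp [smul_mul_assoc]),
        show (⟨c • u, Submodule.smul_of_tower_mem I c hu⟩ : I) = c • ⟨u, hu⟩ from rfl,
        map_smul, map_smul, map_smul, map_smul]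
      linear_combination (norm := module) c • equ
  exact hq
end
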